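/- arXiv:1201.5529 — 2 statements merged into one kernel-verified Lean document; each statement's English description precedes it below -/
import Mathlib

section
/- Let Σ be a type, X an index set, and f : (X → Σ) → (X → Σ) a map that is localized upon some finite subset of X. Then there exists a smallest set upon which f is localized: a set L ⊆ X such that f is localized upon L, and L ⊆ Y for every set Y ⊆ X upon which f is localized. -/
/-- A map `f` on configurations `X → A` is *localized upon* `Y ⊆ X` if
(i) it acts as the identity outside `Y`, and
(ii) the values of `f c` on `Y` only depend on the values of `c` on `Y`. -/
def Localized {X A : Type*} (f : (X → A) → (X → A)) (Y : Set X) : Prop :=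
  (∀ (c : X → A) (x : X), x ∉ Y → f c x = c x) ∧
  (∀ c d : X → A, (∀ x ∈ Y, c x = d x) → ∀ x ∈ Y, f c x = f d x)

lemma localized_inter {X A : Type*} (f : (X → A) → (X → A)) {Y Z : Set X}
    (hY : Localized f Y) (hZ : Localized f Z) : Localized f (Y ∩ Z) := by
  constructor
  · intro c x hx
    by_cases hxY : x ∈ Y
    · exact hZ.1 c x (fun hxZ => hx ⟨hxY, hxZ⟩)
    · exact hY.1 c x hxY
  · intro c d h x hx
    classical
    set e : X → A := fun y => if y ∈ Z then c y else d y with he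
    have h1 : ∀ y ∈ Z, f e y = f c y := by
      apply hZ.2
      intro y hy; simp [he, if_pos hy]
    have h2 : ∀ y ∈ Y, f e y = f d y := by
      apply hY.2
      intro y hy
      by_cases hyZ : y ∈ Z
      · simp only [he, if_pos hyZ]; exact h y ⟨hy, hyZ⟩
      · simp [he, if_neg hyZ]
    rw [← h1 x hx.2, h2 x hx.1]

lemma localized_sInter {X A : Type*} (f : (X → A) → (X → A)) (Y₀ : Set X)
    (hY₀ : Localized f Y₀) (S : Set (Set X)) (hS : S.Finite)
    (hloc : ∀ Y ∈ S, Localized f Y) : Localized f (Y₀ ∩ ⋂₀ S) := by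
  refine Set.Finite.induction_on
    (motive := fun s _ => (∀ Y ∈ s, Localized f Y) → Localized f (Y₀ ∩ ⋂₀ s)) S hS
    (fun _ => by simpa using hY₀) ?_ hloc
  intro a s ha hs ih hloc
  have h1 : Localized f (Y₀ ∩ ⋂₀ s) := ih (fun Y hY => hloc Y (Set.mem_insert_of_mem a hY))
  have h2 : Localized f a := hloc a (Set.mem_insert a s)
  have := localized_inter f h2 h1
  rw [Set.sInter_insert, Set.inter_left_comm]
  exact this

theorem exists_smallest_localization {X A : Type*} (f : (X → A) → (X → A))
    (Y₀ : Set X) (hY₀fin : Y₀.Finite) (hY₀ : Localized f Y₀) :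
    ∃ L : Set X, Localized f L ∧ ∀ Y : Set X, Localized f Y → L ⊆ Y := by
  set S : Set (Set X) := {Y | Y ⊆ Y₀ ∧ Localized f Y} with hSdef
  have hSfin : S.Finite := hY₀fin.finite_subsets.subset (fun Y hY => hY.1)
  refine ⟨Y₀ ∩ ⋂₀ S, localized_sInter f Y₀ hY₀ S hSfin (fun Y hY => hY.2), ?_⟩
  intro Y hY
  have hmem : Y ∩ Y₀ ∈ S := ⟨Set.inter_subset_right, localized_inter f hY hY₀⟩
  intro x hx
  exact (Set.sInter_subset_of_mem hmem hx.2).1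
end

section
/- Let Σ be a type and G a bijection of the space of configurations ℤ → Σ that commutes with the shift σ (where σ(c)(i) = c(i+1)), and suppose the reversible update K₀ is localized upon (S × {false}) ∪ {(0, true)} for a finite set S ⊆ ℤ. Then the infinite product of the K_i implements G × G⁻¹ up to a swap, in the following pointwise sense: for every two-layer configuration c, every j : ℤ and b : Bool, and every finite set F ⊆ ℤ containing j and containing every i with j ∈ i + S, the composition of the K_i over i ∈ F (in any order) satisfies (∏_{i∈F} K_i)(c)(j, b) = ((G⁻¹ × id) ∘ Swap ∘ (G × id))(c)(j, b), where Swap exchanges c(i, false) and c(i, true) at every cell i. -/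
/-- The map `G × id` on two-layer configurations: apply `G` to the main (false)
layer and leave the auxiliary (true) layer unchanged. -/
def GId {A : Type*} (G : (ℤ → A) → (ℤ → A)) (c : ℤ × Bool → A) : ℤ × Bool → A :=
  fun p => if p.2 = true then c p else G (fun j => c (j, false)) p.1

/-- `SwapAt i` exchanges the values `c (i, false)` and `c (i, true)`,
leaving all other values unchanged. -/
def SwapAt {A : Type*} (i : ℤ) (c : ℤ × Bool → A) : ℤ × Bool → A :=
  fun p => if p.1 = i then c (p.1, !p.2) else c p

/-- The reversible update at cell `i`: `K_i = (G⁻¹ × id) ∘ Swap_i ∘ (G × id)`. -/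
def K {A : Type*} (G : (ℤ → A) ≃ (ℤ → A)) (i : ℤ) :
    (ℤ × Bool → A) → (ℤ × Bool → A) :=
  GId G.symm ∘ SwapAt i ∘ GId G

/-- The shift on configurations: `σ c i = c (i + 1)`. -/
def shift {A : Type*} (c : ℤ → A) : ℤ → A := fun i => c (i + 1)

/-- `SwapAll` exchanges the two layers at every cell. -/
def SwapAll {A : Type*} (c : ℤ × Bool → A) : ℤ × Bool → A :=
  fun p => c (p.1, !p.2)

/-! ### Auxiliary machinery: translations -/

/-- Translation by `i`. -/
def Tr {A : Type*} (i : ℤ) (c : ℤ → A) : ℤ → A := fun x => c (x + i)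

lemma Tr_zero {A : Type*} (c : ℤ → A) : Tr 0 c = c := by
  funext x; show c (x + 0) = c x; rw [add_zero]

lemma shift_Tr {A : Type*} (i : ℤ) (c : ℤ → A) : shift (Tr i c) = Tr (i + 1) c := by
  funext x; show c (x + 1 + i) = c (x + (i + 1)); congr 1; ring

lemma shift_inj {A : Type*} {a b : ℤ → A} (h : shift a = shift b) : a = b := by
  funext x
  have h2 := congrFun h (x - 1)
  have e : x - 1 + 1 = x := by ring
  simpa [shift, e] using h2

lemma G_comm_Tr {A : Type*} (G : (ℤ → A) ≃ (ℤ → A))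
    (hshift : ⇑G ∘ shift = shift ∘ ⇑G) (i : ℤ) (c : ℤ → A) :
    G (Tr i c) = Tr i (G c) := by
  have hs : ∀ d : ℤ → A, G (shift d) = shift (G d) := fun d => congrFun hshift d
  induction i using Int.induction_on with
  | zero => rw [Tr_zero, Tr_zero]
  | succ k ih =>
    have : Tr ((k : ℤ) + 1) c = shift (Tr k c) := (shift_Tr _ _).symm
    rw [this, hs, ih, shift_Tr]
  | pred k ih =>
    apply shift_inj
    rw [← hs, shift_Tr, shift_Tr]
    have e : (-(k : ℤ) - 1) + 1 = -k := by ring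
    rw [e, ih]

lemma Gsymm_comm_Tr {A : Type*} (G : (ℤ → A) ≃ (ℤ → A))
    (hshift : ⇑G ∘ shift = shift ∘ ⇑G) (i : ℤ) (c : ℤ → A) :
    G.symm (Tr i c) = Tr i (G.symm c) := by
  apply G.injective
  rw [G.apply_symm_apply, G_comm_Tr G hshift, G.apply_symm_apply]

/-! ### Pointwise formulas for `K` -/

/-- Pointwise formula for `K` on the main layer. -/
lemma K_apply_false {A : Type*} (G : (ℤ → A) ≃ (ℤ → A)) (i : ℤ) (c : ℤ × Bool → A) (x : ℤ) :
    K G i c (x, false)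
      = G.symm (fun k => if k = i then c (k, true) else G (fun m => c (m, false)) k) x := by
  simp [K, GId, SwapAt]

/-- Pointwise formula for `K` on the auxiliary layer. -/
lemma K_apply_true {A : Type*} (G : (ℤ → A) ≃ (ℤ → A)) (i : ℤ) (c : ℤ × Bool → A) (x : ℤ) :
    K G i c (x, true)
      = if x = i then G (fun m => c (m, false)) x else c (x, true) := by
  simp [K, GId, SwapAt]

/-! ### Locality consequences of the localization hypothesis -/

/-- `G e 0` depends only on `e` restricted to `S`. -/
lemma A0 {A : Type*} (G : (ℤ → A) ≃ (ℤ → A)) (S : Finset ℤ)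
    (hK : Localized (K G 0)
      (((↑S : Set ℤ) ×ˢ ({false} : Set Bool)) ∪ {((0 : ℤ), true)}))
    (e e' : ℤ → A) (h : ∀ s ∈ S, e s = e' s) : G e 0 = G e' 0 := by
  classical
  set c : ℤ × Bool → A := fun p => if p.2 = true then e 0 else e p.1 with hc
  set d : ℤ × Bool → A := fun p => if p.2 = true then e 0 else e' p.1 with hd
  have hagree : ∀ x ∈ (((↑S : Set ℤ) ×ˢ ({false} : Set Bool)) ∪ {((0 : ℤ), true)}),
      c x = d x := by
    rintro ⟨x1, x2⟩ (⟨hx1, hx2⟩ | hx)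
    · simp only [Set.mem_singleton_iff] at hx2
      subst hx2
      simp only [hc, hd]
      simpa using h x1 hx1
    · simp only [Set.mem_singleton_iff, Prod.mk.injEq] at hx
      obtain ⟨h1, h2⟩ := hx
      subst h1; subst h2
      simp [hc, hd]
  have hmem : ((0 : ℤ), true) ∈ (((↑S : Set ℤ) ×ˢ ({false} : Set Bool)) ∪ {((0 : ℤ), true)}) :=
    Or.inr rfl
  have := hK.2 c d hagree (0, true) hmem
  rw [K_apply_true, K_apply_true, if_pos rfl, if_pos rfl] at this
  have hcm : (fun m => c (m, false)) = e := by funext m; simp [hc]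
  have hdm : (fun m => d (m, false)) = e' := by funext m; simp [hd]
  rwa [hcm, hdm] at this

/-- Changing a configuration at `0` does not change `G.symm` of it outside `S`. -/
lemma B0 {A : Type*} (G : (ℤ → A) ≃ (ℤ → A)) (S : Finset ℤ)
    (hK : Localized (K G 0)
      (((↑S : Set ℤ) ×ˢ ({false} : Set Bool)) ∪ {((0 : ℤ), true)}))
    (d : ℤ → A) (a : A) (x : ℤ) (hx : x ∉ S) :
    G.symm (Function.update d 0 a) x = G.symm d x := by
  classical
  set c : ℤ × Bool → A := fun p => if p.2 = true then a else G.symm d p.1 with hc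
  have hmem : ((x, false) : ℤ × Bool) ∉
      (((↑S : Set ℤ) ×ˢ ({false} : Set Bool)) ∪ {((0 : ℤ), true)}) := by
    rintro (⟨hx1, _⟩ | hx2)
    · exact hx hx1
    · simp only [Set.mem_singleton_iff, Prod.mk.injEq] at hx2
      exact Bool.false_ne_true hx2.2
  have h1 := hK.1 c (x, false) hmem
  rw [K_apply_false] at h1
  have hinner : (fun k => if k = (0:ℤ) then c (k, true) else G (fun m => c (m, false)) k)
      = Function.update d 0 a := by
    funext k
    rw [Function.update_apply]
    by_cases hk : k = 0
    · simp [hk, hc]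
    · simp only [if_neg hk]
      have : (fun m => c (m, false)) = G.symm d := by funext m; simp [hc]
      rw [this, G.apply_symm_apply]
  rw [hinner] at h1
  have : c (x, false) = G.symm d x := by simp [hc]
  rwa [this] at h1

/-- Shifted version of `A0`: `G e i` depends only on `e` restricted to `i + S`. -/
lemma A_loc {A : Type*} (G : (ℤ → A) ≃ (ℤ → A)) (hshift : ⇑G ∘ shift = shift ∘ ⇑G)
    (S : Finset ℤ)
    (hK : Localized (K G 0)
      (((↑S : Set ℤ) ×ˢ ({false} : Set Bool)) ∪ {((0 : ℤ), true)}))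
    (i : ℤ) (e e' : ℤ → A) (h : ∀ s ∈ S, e (i + s) = e' (i + s)) :
    G e i = G e' i := by
  have h1 : G e i = G (Tr i e) 0 := by
    rw [G_comm_Tr G hshift]; show G e i = G e (0 + i); rw [zero_add]
  have h2 : G e' i = G (Tr i e') 0 := by
    rw [G_comm_Tr G hshift]; show G e' i = G e' (0 + i); rw [zero_add]
  rw [h1, h2]
  apply A0 G S hK
  intro s hs
  show e (s + i) = e' (s + i)
  rw [add_comm]; exact h s hs

/-- Shifted version of `B0`. -/
lemma B_loc {A : Type*} (G : (ℤ → A) ≃ (ℤ → A)) (hshift : ⇑G ∘ shift = shift ∘ ⇑G)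
    (S : Finset ℤ)
    (hK : Localized (K G 0)
      (((↑S : Set ℤ) ×ˢ ({false} : Set Bool)) ∪ {((0 : ℤ), true)}))
    (i : ℤ) (d : ℤ → A) (a : A) (x : ℤ) (hx : ¬∃ s ∈ S, x = i + s) :
    G.symm (Function.update d i a) x = G.symm d x := by
  have h1 : Function.update d i a = Tr (-i) (Function.update (Tr i d) 0 a) := by
    funext y
    show Function.update d i a y = Function.update (Tr i d) 0 a (y + -i)
    by_cases hy : y = i
    · rw [hy, Function.update_self, show i + -i = 0 by ring, Function.update_self]
    · rw [Function.update_of_ne hy, Function.update_of_ne (by omega)]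
      show d y = d (y + -i + i); congr 1; ring
  rw [h1, Gsymm_comm_Tr G hshift]
  show G.symm (Function.update (Tr i d) 0 a) (x + -i) = G.symm d x
  have hxS : x + -i ∉ S := by
    intro hmem
    exact hx ⟨x + -i, hmem, by ring⟩
  rw [B0 G S hK _ a _ hxS, Gsymm_comm_Tr G hshift]
  show G.symm d (x + -i + i) = G.symm d x
  norm_num

/-- Finitely many changes version of `B0`: if `d` and `e` differ only within a
finite set `T` whose influence zone misses `x`, then `G.symm d x = G.symm e x`. -/
lemma Bfin {A : Type*} (G : (ℤ → A) ≃ (ℤ → A)) (hshift : ⇑G ∘ shift = shift ∘ ⇑G)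
    (S : Finset ℤ)
    (hK : Localized (K G 0)
      (((↑S : Set ℤ) ×ˢ ({false} : Set Bool)) ∪ {((0 : ℤ), true)})) :
    ∀ (T : Finset ℤ) (d e : ℤ → A) (x : ℤ),
      (∀ i, d i ≠ e i → i ∈ T) → (∀ i ∈ T, ¬∃ s ∈ S, x = i + s) →
      G.symm d x = G.symm e x := by
  classical
  intro T
  induction T using Finset.induction_on with
  | empty =>
    intro d e x hd _
    have : d = e := by
      funext i
      by_contra hne
      exact absurd (hd i hne) (Finset.notMem_empty i)
    rw [this]
  | @insert i T' hni ih =>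
    intro d e x hd hx
    have h1 : G.symm d x = G.symm (Function.update d i (e i)) x :=
      (B_loc G hshift S hK i d (e i) x (hx i (Finset.mem_insert_self i T'))).symm
    rw [h1]
    apply ih
    · intro k hk
      by_cases hki : k = i
      · subst hki
        rw [Function.update_self] at hk
        exact absurd rfl hk
      · rw [Function.update_of_ne hki] at hk
        rcases Finset.mem_insert.mp (hd k hk) with h | h
        · exact absurd h hki
        · exact h
    · intro k hk
      exact hx k (Finset.mem_insert_of_mem hk)

/-- The key locality lemma for `G.symm`: the value `G.symm d j` only depends on
the restriction of `d` to the set `{i : j ∈ i + S}`. -/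
lemma main_local {A : Type*} (G : (ℤ → A) ≃ (ℤ → A)) (hshift : ⇑G ∘ shift = shift ∘ ⇑G)
    (S : Finset ℤ)
    (hK : Localized (K G 0)
      (((↑S : Set ℤ) ×ˢ ({false} : Set Bool)) ∪ {((0 : ℤ), true)}))
    (j : ℤ) (d e : ℤ → A) (h : ∀ i : ℤ, (∃ s ∈ S, j = i + s) → d i = e i) :
    G.symm d j = G.symm e j := by
  classical
  set W : Finset ℤ :=
    ((S.image (fun s => j - s)).biUnion (fun i => S.image (fun s => i + s))) ∪ {j} with hW
  set z : ℤ → A := fun x => if x ∈ W then G.symm d x else G.symm e x with hz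
  have claim1 : ∀ i : ℤ, (∃ s ∈ S, j = i + s) → G z i = e i := by
    intro i hi
    have hsub : ∀ s ∈ S, z (i + s) = (G.symm d) (i + s) := by
      intro s hs
      have hmem : i + s ∈ W := by
        apply Finset.mem_union_left
        apply Finset.mem_biUnion.mpr
        obtain ⟨s0, hs0, hj0⟩ := hi
        exact ⟨i, Finset.mem_image.mpr ⟨s0, hs0, by omega⟩,
          Finset.mem_image.mpr ⟨s, hs, rfl⟩⟩
      simp [hz, hmem]
    have := A_loc G hshift S hK i z (G.symm d) hsub
    rw [this, G.apply_symm_apply]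
    exact h i hi
  set T : Finset ℤ :=
    (W.biUnion (fun w => S.image (fun s => w - s))).filter
      (fun x => ¬∃ s ∈ S, j = x + s) with hT
  have hdiff : ∀ x, G z x ≠ e x → x ∈ T := by
    intro x hx
    by_contra hxT
    apply hx
    by_cases hxj : ∃ s ∈ S, j = x + s
    · exact claim1 x hxj
    · have hnb : x ∉ W.biUnion (fun w => S.image (fun s => w - s)) := by
        intro hmem
        exact hxT (Finset.mem_filter.mpr ⟨hmem, hxj⟩)
      have hsub : ∀ s ∈ S, z (x + s) = (G.symm e) (x + s) := by
        intro s hs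
        have hnw : x + s ∉ W := by
          intro hmemW
          exact hnb (Finset.mem_biUnion.mpr
            ⟨x + s, hmemW, Finset.mem_image.mpr ⟨s, hs, by omega⟩⟩)
        simp [hz, hnw]
      have := A_loc G hshift S hK x z (G.symm e) hsub
      rw [this, G.apply_symm_apply]
  have hblock : ∀ x ∈ T, ¬∃ s ∈ S, j = x + s := fun x hx => (Finset.mem_filter.mp hx).2
  have hfin := Bfin G hshift S hK T (G z) e j hdiff hblock
  rw [G.symm_apply_apply] at hfin
  have hjW : j ∈ W := Finset.mem_union_right _ (Finset.mem_singleton_self j)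
  have hzj : z j = G.symm d j := by simp [hz, hjW]
  rw [← hzj, hfin]

/-! ### Composition of the `K i` as a conjugated finite swap -/

lemma GId_true {A : Type*} (H : (ℤ → A) → (ℤ → A)) (c : ℤ × Bool → A) (x : ℤ) :
    GId H c (x, true) = c (x, true) := by simp [GId]

lemma GId_false {A : Type*} (H : (ℤ → A) → (ℤ → A)) (c : ℤ × Bool → A) (x : ℤ) :
    GId H c (x, false) = H (fun k => c (k, false)) x := by simp [GId]

lemma gid_symm_gid {A : Type*} (G : (ℤ → A) ≃ (ℤ → A)) (c : ℤ × Bool → A) :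
    GId G.symm (GId G c) = c := by
  funext p
  obtain ⟨x, b⟩ := p
  cases b
  · rw [GId_false]
    have : (fun k => GId (⇑G) c (k, false)) = G (fun k => c (k, false)) := by
      funext k; rw [GId_false]
    rw [this, G.symm_apply_apply]
  · rw [GId_true, GId_true]

lemma gid_gid_symm {A : Type*} (G : (ℤ → A) ≃ (ℤ → A)) (c : ℤ × Bool → A) :
    GId G (GId G.symm c) = c := by
  funext p
  obtain ⟨x, b⟩ := p
  cases b
  · rw [GId_false]
    have : (fun k => GId (⇑G.symm) c (k, false)) = G.symm (fun k => c (k, false)) := by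
      funext k; rw [GId_false]
    rw [this, G.apply_symm_apply]
  · rw [GId_true, GId_true]

lemma fold_eq {A : Type*} (G : (ℤ → A) ≃ (ℤ → A)) :
    ∀ (l : List ℤ) (c : ℤ × Bool → A),
      (l.map (K G)).foldr (· ∘ ·) id c
        = GId G.symm ((l.map SwapAt).foldr (· ∘ ·) id (GId G c)) := by
  intro l
  induction l with
  | nil => intro c; simp [gid_symm_gid]
  | cons i l' ih =>
    intro c
    simp only [List.map_cons, List.foldr_cons, Function.comp_apply]
    rw [ih]
    show K G i (GId G.symm _) = _
    simp only [K, Function.comp_apply]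
    rw [gid_gid_symm]

lemma swapfold_eq {A : Type*} :
    ∀ (l : List ℤ), l.Nodup → ∀ (c : ℤ × Bool → A) (x : ℤ) (b : Bool),
      (l.map SwapAt).foldr (· ∘ ·) id c (x, b)
        = if x ∈ l.toFinset then c (x, !b) else c (x, b) := by
  intro l
  induction l with
  | nil => intros; simp
  | cons i l' ih =>
    intro hnd c x b
    obtain ⟨hni, hnd'⟩ := List.nodup_cons.mp hnd
    simp only [List.map_cons, List.foldr_cons, Function.comp_apply]
    show SwapAt i _ (x, b) = _
    simp only [SwapAt]
    by_cases hx : x = i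
    · subst hx
      rw [if_pos rfl, ih hnd' c x (!b), if_neg (by simpa using hni),
        if_pos (by simp)]
    · rw [if_neg hx, ih hnd' c x b]
      simp [List.toFinset_cons, Finset.mem_insert, hx]

theorem infinite_product_of_K_implements_G {A : Type*} (G : (ℤ → A) ≃ (ℤ → A))
    (hshift : ⇑G ∘ shift = shift ∘ ⇑G) (S : Finset ℤ)
    (hK : Localized (K G 0)
      (((↑S : Set ℤ) ×ˢ ({false} : Set Bool)) ∪ {((0 : ℤ), true)})) :
    ∀ (c : ℤ × Bool → A) (j : ℤ) (b : Bool) (F : Finset ℤ),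
      j ∈ F → (∀ i : ℤ, (∃ s ∈ S, j = i + s) → i ∈ F) →
      ∀ l : List ℤ, l.Nodup → l.toFinset = F →
        (l.map (K G)).foldr (· ∘ ·) id c (j, b)
          = (GId G.symm ∘ SwapAll ∘ GId G) c (j, b) := by
  intro c j b F hjF hSF l hnd hlF
  subst hlF
  rw [fold_eq G l c]
  simp only [Function.comp_apply]
  cases b with
  | true =>
    rw [GId_true, GId_true, swapfold_eq l hnd, if_pos hjF]
    show GId (⇑G) c (j, !true) = SwapAll (GId (⇑G) c) (j, true)
    simp [SwapAll]
  | false =>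
    rw [GId_false, GId_false]
    apply main_local G hshift S hK j
    intro i hi
    have hiF : i ∈ l.toFinset := hSF i hi
    show (l.map SwapAt).foldr (· ∘ ·) id (GId (⇑G) c) (i, false)
      = SwapAll (GId (⇑G) c) (i, false)
    rw [swapfold_eq l hnd, if_pos hiF]
    show GId (⇑G) c (i, !false) = SwapAll (GId (⇑G) c) (i, false)
    simp [SwapAll]
end
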